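/- Let (S̃_n) be a process with S̃_0 = 0, S̃_{n+1} = (1 + S̃_n)·λ̃_{n+1}, where λ̃_{n+1} ≥ 0 and E[λ̃_{n+1} | F_n] = 1 a.s. For A > 0 define the stopping time τ̃_s = inf{ n ≥ 1 : S̃_n ≥ A }. If E[τ̃_s] < ∞, then E[τ̃_s] ≥ A. -/

import Mathlib

/-!
`S n - n` is a martingale, so optional stopping at the bounded time `τ ∧ n` gives
`E[S_{τ ∧ n}] = E[τ ∧ n] ≤ E[τ]`. Since `S ≥ 0` and `S_τ ≥ A`, Markov's inequality gives
`A · P(τ ≤ n) ≤ E[S_{τ ∧ n}]`, and `P(τ ≤ n) → 1`.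
-/

open MeasureTheory ProbabilityTheory Filter Topology

namespace MeasureTheory

variable {Ω : Type*} {m0 : MeasurableSpace Ω} {μ : Measure Ω}

theorem integrable_of_condExp_ae_eq_const [NeZero μ] {m : MeasurableSpace Ω} {f : Ω → ℝ}
    {c : ℝ} (hc : c ≠ 0) (h : μ[f | m] =ᵐ[μ] fun _ => c) : Integrable f μ := by
  by_contra hf
  rw [condExp_of_not_integrable hf] at h
  obtain ⟨ω, hω⟩ := h.exists
  exact hc hω.symm

theorem condExp_mul_ae_eq_of_condExp_ae_eq_one [NeZero μ] {m : MeasurableSpace Ω}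
    {f g : Ω → ℝ} (hf : StronglyMeasurable[m] f) (hfg : Integrable (f * g) μ)
    (hg : μ[g | m] =ᵐ[μ] fun _ => 1) : μ[f * g | m] =ᵐ[μ] f := by
  filter_upwards [condExp_mul_of_stronglyMeasurable_left hf hfg
    (integrable_of_condExp_ae_eq_const one_ne_zero hg), hg] with ω hfg_ω hg_ω
  simp [hfg_ω, hg_ω]

theorem martingale_sub_id_of_condExp_succ [IsFiniteMeasure μ] {ℱ : Filtration ℕ m0}
    {S : ℕ → Ω → ℝ} (hS_adapted : Adapted ℱ S) (hS_int : ∀ n, Integrable (S n) μ)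
    (hS_drift : ∀ n, μ[S (n + 1) | ℱ n] =ᵐ[μ] fun ω => S n ω + 1) :
    Martingale (fun n ω => S n ω - n) ℱ μ := by
  refine martingale_nat (fun n => ((hS_adapted n).sub measurable_const).stronglyMeasurable)
    (fun n => (hS_int n).sub (integrable_const _)) fun n => ?_
  have h := condExp_sub (m := ℱ n) (hS_int (n + 1)) (integrable_const ((n + 1 : ℕ) : ℝ))
  rw [condExp_const (ℱ.le n)] at h
  filter_upwards [h, hS_drift n] with ω hω hdrift
  change _ = μ[S (n + 1) - fun _ => ((n + 1 : ℕ) : ℝ) | ℱ n] ω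
  rw [hω, Pi.sub_apply, hdrift]
  push_cast
  ring

theorem Martingale.integral_stoppedValue_eq_integral_zero {ℱ : Filtration ℕ m0}
    [SigmaFiniteFiltration μ ℱ] {f : ℕ → Ω → ℝ} (hf : Martingale f ℱ μ) {τ : Ω → WithTop ℕ}
    (hτ : IsStoppingTime ℱ τ) {N : ℕ} (hbdd : ∀ ω, τ ω ≤ N) :
    ∫ ω, stoppedValue f τ ω ∂μ = ∫ ω, f 0 ω ∂μ := by
  have h_zero_le : (fun _ => ((0 : ℕ) : WithTop ℕ)) ≤ τ := fun _ => by simp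
  have h_le := hf.submartingale.expected_stoppedValue_mono
    (isStoppingTime_const ℱ 0) hτ h_zero_le hbdd
  have h_ge : ∫ ω, -f 0 ω ∂μ ≤ ∫ ω, -stoppedValue f τ ω ∂μ :=
    hf.neg.submartingale.expected_stoppedValue_mono (isStoppingTime_const ℱ 0) hτ h_zero_le hbdd
  rw [stoppedValue_const] at h_le
  rw [integral_neg, integral_neg, neg_le_neg_iff] at h_ge
  exact le_antisymm h_ge h_le

theorem Martingale.integral_stoppedValue_eq_of_sub_id [IsFiniteMeasure μ]
    {ℱ : Filtration ℕ m0} {S : ℕ → Ω → ℝ} (hM : Martingale (fun n ω => S n ω - n) ℱ μ)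
    {σ : Ω → ℕ} (hσ : IsStoppingTime ℱ fun ω => (σ ω : WithTop ℕ)) {N : ℕ}
    (hbdd : ∀ ω, σ ω ≤ N) :
    ∫ ω, S (σ ω) ω ∂μ = ∫ ω, S 0 ω ∂μ + ∫ ω, (σ ω : ℝ) ∂μ := by
  have hbdd' : ∀ ω, (σ ω : WithTop ℕ) ≤ N := fun ω => mod_cast hbdd ω
  have hS_int : ∀ n, Integrable (S n) μ := fun n =>
    ((hM.integrable n).add (integrable_const (n : ℝ))).congr (ae_of_all _ fun ω => by simp)
  have hSσ : Integrable (fun ω => S (σ ω) ω) μ := integrable_stoppedValue ℕ hσ hS_int hbdd'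
  have hMσ : Integrable (fun ω => S (σ ω) ω - σ ω) μ :=
    hM.submartingale.integrable_stoppedValue hσ hbdd'
  have hσ_int : Integrable (fun ω => (σ ω : ℝ)) μ :=
    (hSσ.sub hMσ).congr (ae_of_all _ fun ω => by simp)
  have h_opt : ∫ ω, S (σ ω) ω - σ ω ∂μ = ∫ ω, S 0 ω ∂μ :=
    (hM.integral_stoppedValue_eq_integral_zero hσ hbdd').trans (by simp)
  rw [← h_opt, ← integral_add hMσ hσ_int]
  simp

theorem Adapted.isStoppingTime_of_eq_sInf {β : Type*} [MeasurableSpace β]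
    {ℱ : Filtration ℕ m0} {u : ℕ → Ω → β} (hu : Adapted ℱ u) {s : Set β}
    (hs : MeasurableSet s) {n : ℕ} {τ : Ω → ℕ} (hτ : ∀ ω, τ ω = sInf {i | n ≤ i ∧ u i ω ∈ s})
    (h_exists : ∀ ω, ∃ j, n ≤ j ∧ u j ω ∈ s) :
    IsStoppingTime ℱ fun ω => (τ ω : WithTop ℕ) := by
  have h_hit : (fun ω => (τ ω : WithTop ℕ)) = hittingAfter u s n :=
    funext fun ω => by
      rw [hittingAfter, if_pos (h_exists ω), hτ]
      rfl
  rw [h_hit]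
  exact hu.isStoppingTime_hittingAfter hs

theorem IsStoppingTime.coe_min_const {ι : Type*} [LinearOrder ι] {ℱ : Filtration ι m0}
    {τ : Ω → ι} (hτ : IsStoppingTime ℱ fun ω => (τ ω : WithTop ι)) (i : ι) :
    IsStoppingTime ℱ fun ω => ((min (τ ω) i : ι) : WithTop ι) := by
  rw [show (fun ω => ((min (τ ω) i : ι) : WithTop ι)) = fun ω => min (τ ω : WithTop ι) i
    from funext fun ω => WithTop.coe_min _ _]
  exact hτ.min_const i

theorem tendsto_measureReal_setOf_le_atTop [IsProbabilityMeasure μ] (τ : Ω → ℕ) :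
    Tendsto (fun n : ℕ => μ.real {ω | τ ω ≤ n}) atTop (𝓝 1) := by
  have h := tendsto_measure_iUnion_atTop (μ := μ)
    (s := fun n : ℕ => {ω | τ ω ≤ n}) fun m n hmn ω (h : τ ω ≤ m) => h.trans hmn
  rw [Set.iUnion_eq_univ_iff.2 fun ω => ⟨τ ω, show τ ω ≤ τ ω from le_rfl⟩, measure_univ] at h
  exact (ENNReal.tendsto_toReal ENNReal.one_ne_top).comp h

end MeasureTheory

def IsShiryaevRoberts {Ω : Type*} (lam S : ℕ → Ω → ℝ) : Prop :=
  (∀ ω, S 0 ω = 0) ∧ ∀ n ω, S (n + 1) ω = (1 + S n ω) * lam (n + 1) ω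

namespace IsShiryaevRoberts

variable {Ω : Type*} {m0 : MeasurableSpace Ω} {μ : Measure Ω} {lam S : ℕ → Ω → ℝ}

theorem nonneg (hS : IsShiryaevRoberts lam S) (hlam : ∀ n ω, 0 ≤ lam n ω) (n : ℕ) (ω : Ω) :
    0 ≤ S n ω := by
  induction n with
  | zero => rw [hS.1]
  | succ n ih =>
    rw [hS.2]
    exact mul_nonneg (by linarith) (hlam _ _)

theorem adapted (hS : IsShiryaevRoberts lam S) {ℱ : Filtration ℕ m0} (hlam : Adapted ℱ lam) :
    Adapted ℱ S := by
  intro n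
  induction n with
  | zero =>
    rw [funext hS.1]
    exact measurable_const
  | succ n ih =>
    rw [funext (hS.2 n)]
    exact (measurable_const.add (ih.mono (ℱ.mono n.le_succ) le_rfl)).mul (hlam (n + 1))

theorem condExp_succ [NeZero μ] (hS : IsShiryaevRoberts lam S) {ℱ : Filtration ℕ m0}
    (hlam : Adapted ℱ lam) {n : ℕ} (hlam_cond : μ[lam (n + 1) | ℱ n] =ᵐ[μ] fun _ => 1)
    (hS_int : Integrable (S (n + 1)) μ) : μ[S (n + 1) | ℱ n] =ᵐ[μ] fun ω => S n ω + 1 := by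
  have h_eq : ((fun _ => 1) + S n) * lam (n + 1) = S (n + 1) :=
    funext fun ω => (hS.2 n ω).symm
  have h := condExp_mul_ae_eq_of_condExp_ae_eq_one
    (stronglyMeasurable_const.add (hS.adapted hlam n).stronglyMeasurable) (h_eq ▸ hS_int)
    hlam_cond
  rw [h_eq] at h
  filter_upwards [h] with ω hω
  rw [hω, Pi.add_apply, add_comm]

end IsShiryaevRoberts

/-- For the SR statistic S̃ with threshold A > 0 and
τ̃_s = inf{n ≥ 1 : S̃_n ≥ A}, if E[τ̃_s] < ∞ then E[τ̃_s] ≥ A. -/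
theorem sr_arl_lower_bound
    {Ω : Type*} {m0 : MeasurableSpace Ω} {μ : Measure Ω} [IsProbabilityMeasure μ]
    (ℱ : Filtration ℕ m0)
    (lam : ℕ → Ω → ℝ)
    (hlam_adapted : Adapted ℱ lam)
    (hlam_nonneg : ∀ n ω, 0 ≤ lam n ω)
    (hlam_cond : ∀ n, μ[lam (n + 1) | ℱ n] =ᵐ[μ] fun _ => (1 : ℝ))
    (S : ℕ → Ω → ℝ)
    (hS0 : ∀ ω, S 0 ω = 0)
    (hSrec : ∀ n ω, S (n + 1) ω = (1 + S n ω) * lam (n + 1) ω)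
    (hSint : ∀ n, Integrable (S n) μ)
    (A : ℝ) (hA : 0 < A)
    (τ : Ω → ℕ)
    (hτ : ∀ ω, τ ω = sInf {n | 1 ≤ n ∧ A ≤ S n ω})
    (hτfin : ∀ ω, ∃ n, 1 ≤ n ∧ A ≤ S n ω)
    (hτint : Integrable (fun ω => (τ ω : ℝ)) μ) :
    A ≤ ∫ ω, (τ ω : ℝ) ∂μ := by
  have hSR : IsShiryaevRoberts lam S := ⟨hS0, hSrec⟩
  have hM : Martingale (fun n ω => S n ω - n) ℱ μ :=
    martingale_sub_id_of_condExp_succ (hSR.adapted hlam_adapted) hSint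
      fun n => hSR.condExp_succ hlam_adapted (hlam_cond n) (hSint (n + 1))
  have hτ_stop : IsStoppingTime ℱ fun ω => (τ ω : WithTop ℕ) :=
    (hSR.adapted hlam_adapted).isStoppingTime_of_eq_sInf measurableSet_Ici hτ hτfin
  have hA_le : ∀ ω, A ≤ S (τ ω) ω := fun ω => by
    rw [hτ]
    exact (Nat.sInf_mem (hτfin ω)).2
  have h_bound (n : ℕ) : A * μ.real {ω | τ ω ≤ n} ≤ ∫ ω, (τ ω : ℝ) ∂μ := by
    have hσ : IsStoppingTime ℱ fun ω => ((min (τ ω) n : ℕ) : WithTop ℕ) :=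
      hτ_stop.coe_min_const n
    calc A * μ.real {ω | τ ω ≤ n}
        ≤ A * μ.real {ω | A ≤ S (min (τ ω) n) ω} := by
          refine mul_le_mul_of_nonneg_left (measureReal_mono fun ω hω => ?_) hA.le
          change A ≤ S (min (τ ω) n) ω
          rw [min_eq_left hω]
          exact hA_le ω
      _ ≤ ∫ ω, S (min (τ ω) n) ω ∂μ :=
          mul_meas_ge_le_integral_of_nonneg (ae_of_all _ fun ω => hSR.nonneg hlam_nonneg _ ω)
            (integrable_stoppedValue ℕ hσ hSint fun ω => WithTop.coe_le_coe.2 (min_le_right _ n)) A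
      _ = ∫ ω, ((min (τ ω) n : ℕ) : ℝ) ∂μ := by
          rw [hM.integral_stoppedValue_eq_of_sub_id hσ fun ω => min_le_right _ n]
          simp [hS0]
      _ ≤ ∫ ω, (τ ω : ℝ) ∂μ :=
          integral_mono_of_nonneg (ae_of_all _ fun _ => by positivity) hτint
            (ae_of_all _ fun ω => by simp)
  simpa using le_of_tendsto' ((tendsto_measureReal_setOf_le_atTop τ).const_mul A) h_bound
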